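/- The topological space (X,τ) is zero-dimensional, i.e., it has a base of the topology τ consisting of clopen sets. -/

import Mathlib

universe u v

open Ordinal Set Topology Cardinal

namespace LawsonExample

def Xset (lam : Cardinal.{u}) : Set (Ordinal.{u} → Fin 3) :=
  {x | (∀ γ : Ordinal.{u}, lam.ord ≤ γ → x γ = 2) ∧ {γ : Ordinal.{u} | x γ ≠ 2}.Finite}

noncomputable def nrm (x : Ordinal.{u} → Fin 3) : Ordinal.{u} :=
  sInf {α | ∀ γ, α ≤ γ → x γ = 2}

noncomputable def Vnbhd (lam : Cardinal.{u}) (x : ↥(Xset lam)) (α : Ordinal.{u}) :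
    Set ↥(Xset lam) :=
  if x.1 0 = 2 then {x}
  else if x.1 0 = 1 then
    {y | (∀ γ, 1 ≤ γ → γ < α → y.1 γ = x.1 γ) ∧
         (∀ γ, α ≤ γ → γ < lam.ord → y.1 γ ≠ 1) ∧
         (y.1 0 = 1 ∨ (y.1 0 = 2 ∧ α < nrm y.1))}
  else
    {y | (∀ γ, 1 ≤ γ → γ < α → y.1 γ = x.1 γ) ∧
         (y.1 0 = 0 ∨ (y.1 0 = 2 ∧ α < nrm y.1 ∧ y.1 (Ordinal.pred (nrm y.1)) = 1))}

def tauSet (lam : Cardinal.{u}) : Set (Set ↥(Xset lam)) :=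
  {U | ∀ x ∈ U, ∃ α : Ordinal.{u}, nrm x.1 ≤ α ∧ α < lam.ord ∧ Vnbhd lam x α ⊆ U}

lemma nrm_spec {lam : Cardinal.{u}} (x : ↥(Xset lam)) {γ : Ordinal.{u}}
    (h : nrm x.1 ≤ γ) : x.1 γ = 2 := by
  have hne : {α : Ordinal.{u} | ∀ γ, α ≤ γ → x.1 γ = 2}.Nonempty :=
    ⟨lam.ord, fun γ hγ => x.2.1 γ hγ⟩
  exact csInf_mem hne γ h

lemma nrm_lt {lam : Cardinal.{u}} (hlam : ℵ₀ ≤ lam) (x : ↥(Xset lam)) :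
    nrm x.1 < lam.ord := by
  have hlim : Order.IsSuccLimit lam.ord := Cardinal.isSuccLimit_ord hlam
  rcases eq_empty_or_nonempty {γ | x.1 γ ≠ 2} with he | hne
  · have h0 : nrm x.1 ≤ 0 := csInf_le' (fun γ _ => by
      by_contra hc
      exact (eq_empty_iff_forall_notMem.1 he γ) hc)
    exact lt_of_le_of_lt h0 hlim.pos
  · set m := sSup {γ | x.1 γ ≠ 2} with hm_def
    have hmem : m ∈ {γ | x.1 γ ≠ 2} := hne.csSup_mem x.2.2
    have hm : m < lam.ord := lt_of_not_ge fun h => hmem (x.2.1 m h)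
    have hb : nrm x.1 ≤ m + 1 := csInf_le' (fun γ hγ => by
      by_contra hc
      have hle : γ ≤ m := le_csSup x.2.2.bddAbove hc
      rw [Ordinal.add_one_eq_succ] at hγ
      exact absurd hγ (not_le.2 (lt_of_le_of_lt hle (Order.lt_succ m))))
    have : m + 1 < lam.ord := by
      rw [Ordinal.add_one_eq_succ]; exact hlim.succ_lt hm
    exact lt_of_le_of_lt hb this

lemma fin3_cases (a : Fin 3) : a = 0 ∨ a = 1 ∨ a = 2 := by revert a; decide

lemma mem_Vnbhd_self {lam : Cardinal.{u}} (x : ↥(Xset lam)) {α : Ordinal.{u}}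
    (h : nrm x.1 ≤ α) : x ∈ Vnbhd lam x α := by
  rcases fin3_cases (x.1 0) with h0 | h0 | h0
  · have h2 : x.1 0 ≠ 2 := by rw [h0]; decide
    have h1 : x.1 0 ≠ 1 := by rw [h0]; decide
    rw [Vnbhd, if_neg h2, if_neg h1]
    exact ⟨fun γ _ _ => rfl, Or.inl h0⟩
  · have h2 : x.1 0 ≠ 2 := by rw [h0]; decide
    rw [Vnbhd, if_neg h2, if_pos h0]
    refine ⟨fun γ _ _ => rfl, fun γ hγ _ => ?_, Or.inl h0⟩
    rw [nrm_spec x (le_trans h hγ)]; decide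
  · rw [Vnbhd, if_pos h0]; exact rfl

lemma Vnbhd_mono {lam : Cardinal.{u}} (x : ↥(Xset lam)) {α β : Ordinal.{u}}
    (hα : nrm x.1 ≤ α) (hαβ : α ≤ β) : Vnbhd lam x β ⊆ Vnbhd lam x α := by
  rcases fin3_cases (x.1 0) with h0 | h0 | h0
  · have h2 : x.1 0 ≠ 2 := by rw [h0]; decide
    have h1 : x.1 0 ≠ 1 := by rw [h0]; decide
    rw [Vnbhd, Vnbhd, if_neg h2, if_neg h1, if_neg h2, if_neg h1]
    rintro y ⟨hr, hy⟩
    refine ⟨fun γ h1γ h2γ => hr γ h1γ (lt_of_lt_of_le h2γ hαβ), ?_⟩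
    rcases hy with hy | ⟨hy2, hylt, hyp⟩
    · exact Or.inl hy
    · exact Or.inr ⟨hy2, lt_of_le_of_lt hαβ hylt, hyp⟩
  · have h2 : x.1 0 ≠ 2 := by rw [h0]; decide
    rw [Vnbhd, Vnbhd, if_neg h2, if_pos h0, if_neg h2, if_pos h0]
    rintro y ⟨hr, hns, hy⟩
    have hα1 : 1 ≤ α := by
      by_contra hc
      have : α = 0 := Ordinal.lt_one_iff_zero.1 (not_le.1 hc)
      have : x.1 0 = 2 := nrm_spec x (by rw [← this]; exact hα)
      exact h2 this
    refine ⟨fun γ h1γ h2γ => hr γ h1γ (lt_of_lt_of_le h2γ hαβ), ?_, ?_⟩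
    · intro γ hγ hγlt
      by_cases hγβ : β ≤ γ
      · exact hns γ hγβ hγlt
      · have h1γ : 1 ≤ γ := le_trans hα1 hγ
        rw [hr γ h1γ (not_le.1 hγβ)]
        rw [nrm_spec x (le_trans hα hγ)]
        decide
    · rcases hy with hy | ⟨hy2, hylt⟩
      · exact Or.inl hy
      · exact Or.inr ⟨hy2, lt_of_le_of_lt hαβ hylt⟩
  · rw [Vnbhd, Vnbhd, if_pos h0, if_pos h0]

noncomputable def tau (lam : Cardinal.{u}) (hlam : ℵ₀ ≤ lam) :
    TopologicalSpace ↥(Xset lam) where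
  IsOpen U := U ∈ tauSet lam
  isOpen_univ := fun x _ =>
    ⟨nrm x.1, le_rfl, nrm_lt hlam x, subset_univ _⟩
  isOpen_inter := by
    intro U V hU hV x hx
    obtain ⟨α, hα1, hα2, hα3⟩ := hU x hx.1
    obtain ⟨β, hβ1, hβ2, hβ3⟩ := hV x hx.2
    refine ⟨max α β, le_trans hα1 (le_max_left _ _), max_lt hα2 hβ2, fun y hy => ?_⟩
    exact ⟨hα3 (Vnbhd_mono x hα1 (le_max_left _ _) hy),
           hβ3 (Vnbhd_mono x hβ1 (le_max_right _ _) hy)⟩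
  isOpen_sUnion := by
    intro S hS x hx
    obtain ⟨U, hU, hxU⟩ := hx
    obtain ⟨α, hα1, hα2, hα3⟩ := hS U hU x hxU
    exact ⟨α, hα1, hα2, fun y hy => ⟨U, hU, hα3 hy⟩⟩


/-- The semilattice operation of `X`: pointwise minimum. -/
noncomputable def pmin (lam : Cardinal.{u}) (x y : ↥(Xset lam)) : ↥(Xset lam) :=
  ⟨fun γ => min (x.1 γ) (y.1 γ), by
    constructor
    · intro γ hγ
      show min (x.1 γ) (y.1 γ) = 2
      rw [x.2.1 γ hγ, y.2.1 γ hγ, min_self]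
    · refine (x.2.2.union y.2.2).subset fun γ hγ => ?_
      have hγ' : min (x.1 γ) (y.1 γ) ≠ 2 := hγ
      simp only [mem_union, mem_setOf_eq]
      by_contra hc
      push_neg at hc
      rw [hc.1, hc.2, min_self] at hγ'
      exact hγ' rfl⟩

/-- `B` is a base of the topology `t`: it consists of open sets, and every open set is a
union of members of `B`. -/
def IsBase {X : Type v} (t : TopologicalSpace X) (B : Set (Set X)) : Prop :=
  (∀ U ∈ B, IsOpen[t] U) ∧ ∀ U, IsOpen[t] U → ∃ S ⊆ B, U = ⋃₀ S

/-- The family `ℬ = {V_α(x) : x ∈ X, α ∈ [‖x‖, λ)}`. -/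
def Vfamily (lam : Cardinal.{u}) : Set (Set ↥(Xset lam)) :=
  {W | ∃ (x : ↥(Xset lam)) (α : Ordinal.{u}), nrm x.1 ≤ α ∧ α < lam.ord ∧ W = Vnbhd lam x α}

/-- The weight of a topological space: the smallest cardinality of a base of its topology. -/
noncomputable def weight {X : Type v} (t : TopologicalSpace X) : Cardinal.{v} :=
  sInf {c : Cardinal.{v} | ∃ B : Set (Set X), IsBase t B ∧ c = Cardinal.mk ↥B}

/-- The function `𝟎_β`, with `𝟎_β β = 0` and `𝟎_β γ = 2` for `γ ≠ β`. -/
noncomputable def zeroF (β : Ordinal.{u}) : Ordinal.{u} → Fin 3 :=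
  fun γ => if γ = β then 0 else 2

/-- The function `𝟏_β`, with `𝟏_β β = 1` and `𝟏_β γ = 2` for `γ ≠ β`. -/
noncomputable def oneF (β : Ordinal.{u}) : Ordinal.{u} → Fin 3 :=
  fun γ => if γ = β then 1 else 2

lemma zeroF_mem (lam : Cardinal.{u}) {β : Ordinal.{u}} (h : β < lam.ord) :
    zeroF β ∈ Xset lam := by
  constructor
  · intro γ hγ
    have hne : γ ≠ β := fun e => absurd h (not_lt.2 (e ▸ hγ))
    simp [zeroF, hne]
  · refine (finite_singleton β).subset fun γ hγ => ?_
    simp only [mem_setOf_eq, zeroF] at hγ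
    by_contra hc
    simp only [mem_singleton_iff] at hc
    rw [if_neg hc] at hγ
    exact hγ rfl

lemma oneF_mem (lam : Cardinal.{u}) {β : Ordinal.{u}} (h : β < lam.ord) :
    oneF β ∈ Xset lam := by
  constructor
  · intro γ hγ
    have hne : γ ≠ β := fun e => absurd h (not_lt.2 (e ▸ hγ))
    simp [oneF, hne]
  · refine (finite_singleton β).subset fun γ hγ => ?_
    simp only [mem_setOf_eq, oneF] at hγ
    by_contra hc
    simp only [mem_singleton_iff] at hc
    rw [if_neg hc] at hγ
    exact hγ rfl

/-- `𝟎_β` as an element of `X` (for `β < λ`). -/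
noncomputable def zeroE (lam : Cardinal.{u}) {β : Ordinal.{u}} (h : β < lam.ord) :
    ↥(Xset lam) := ⟨zeroF β, zeroF_mem lam h⟩

/-- `𝟏_β` as an element of `X` (for `β < λ`). -/
noncomputable def oneE (lam : Cardinal.{u}) {β : Ordinal.{u}} (h : β < lam.ord) :
    ↥(Xset lam) := ⟨oneF β, oneF_mem lam h⟩

/-
Each `V_α(x)` is open, because `y ∈ V_α(x)` and `β ≥ α` give `V_β(y) ⊆ V_α(x)`. It is also
closed: if `y ∉ V_α(x)`, then `V_β(y)` misses `V_α(x)` for `β = max α ‖y‖`. Indeed a common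
point `z` of the two sets forces `x(0) = y(0)`, since a point with value `2` at `0` lies in a
neighbourhood of an element of `X_1` only if it takes no value `1` above `α`, and in one of an
element of `X_0` only if its last nonzero entry is `1`; then `y` agrees with `z`, and hence with
`x`, on `[1, α)`, which puts `y` in `V_α(x)`.
-/

open TopologicalSpace

section Neighbourhoods

variable {lam : Cardinal.{u}} {x y z : ↥(Xset lam)} {α β : Ordinal.{u}}

lemma Vnbhd_of_two (hx : x.1 0 = 2) : Vnbhd lam x α = {x} := by
  rw [Vnbhd, if_pos hx]

lemma mem_Vnbhd_of_one (hx : x.1 0 = 1) :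
    y ∈ Vnbhd lam x α ↔ (∀ γ, 1 ≤ γ → γ < α → y.1 γ = x.1 γ) ∧
      (∀ γ, α ≤ γ → γ < lam.ord → y.1 γ ≠ 1) ∧ (y.1 0 = 1 ∨ (y.1 0 = 2 ∧ α < nrm y.1)) := by
  rw [Vnbhd, if_neg (by rw [hx]; decide), if_pos hx]
  rfl

lemma mem_Vnbhd_of_zero (hx : x.1 0 = 0) :
    y ∈ Vnbhd lam x α ↔ (∀ γ, 1 ≤ γ → γ < α → y.1 γ = x.1 γ) ∧
      (y.1 0 = 0 ∨ (y.1 0 = 2 ∧ α < nrm y.1 ∧ y.1 (Ordinal.pred (nrm y.1)) = 1)) := by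
  rw [Vnbhd, if_neg (by rw [hx]; decide), if_neg (by rw [hx]; decide)]
  rfl

lemma one_le_of_nrm_le (hx : x.1 0 ≠ 2) (hα : nrm x.1 ≤ α) : 1 ≤ α := by
  rw [Order.one_le_iff_ne_zero]
  rintro rfl
  exact hx (nrm_spec x hα)

lemma agree_of_mem_Vnbhd (hy : y ∈ Vnbhd lam x α) :
    ∀ γ, 1 ≤ γ → γ < α → y.1 γ = x.1 γ := by
  rcases fin3_cases (x.1 0) with hx | hx | hx
  · exact ((mem_Vnbhd_of_zero hx).1 hy).1
  · exact ((mem_Vnbhd_of_one hx).1 hy).1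
  · rw [Vnbhd_of_two hx, mem_singleton_iff] at hy
    simp [hy]

lemma head_eq_of_mem_Vnbhd (hy : y ∈ Vnbhd lam x α) (hy2 : y.1 0 ≠ 2) : y.1 0 = x.1 0 := by
  rcases fin3_cases (x.1 0) with hx | hx | hx
  · obtain ⟨-, h | ⟨h, -⟩⟩ := (mem_Vnbhd_of_zero hx).1 hy <;> simp_all
  · obtain ⟨-, -, h | ⟨h, -⟩⟩ := (mem_Vnbhd_of_one hx).1 hy <;> simp_all
  · rw [Vnbhd_of_two hx, mem_singleton_iff] at hy
    rw [hy]

lemma lt_nrm_of_mem_Vnbhd (hy : y ∈ Vnbhd lam x α) (hx2 : x.1 0 ≠ 2) (hy2 : y.1 0 = 2) :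
    α < nrm y.1 := by
  rcases fin3_cases (x.1 0) with hx | hx | hx
  · obtain ⟨-, h | ⟨-, h, -⟩⟩ := (mem_Vnbhd_of_zero hx).1 hy
    · simp [hy2] at h
    · exact h
  · obtain ⟨-, -, h | ⟨-, h⟩⟩ := (mem_Vnbhd_of_one hx).1 hy
    · simp [hy2] at h
    · exact h
  · exact absurd hx hx2

/-- A common point would have its last nonzero entry `1` above `α`, where neighbourhoods of
elements of `X_1` allow no `1`. -/
lemma disjoint_Vnbhd_of_one_of_zero (hx : x.1 0 = 1) (hy : y.1 0 = 0) :
    Disjoint (Vnbhd lam x α) (Vnbhd lam y β) := by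
  rw [Set.disjoint_left]
  intro z hzx hzy
  obtain ⟨-, hno1, hz | ⟨hz, hαz⟩⟩ := (mem_Vnbhd_of_one hx).1 hzx <;>
    obtain ⟨-, hz' | ⟨hz', -, hlast⟩⟩ := (mem_Vnbhd_of_zero hy).1 hzy <;>
    try simp [hz] at hz'
  · have hpred : pred (nrm z.1) < lam.ord :=
      lt_of_not_ge fun h => absurd (z.2.1 _ h) (by rw [hlast]; decide)
    exact hno1 _ (Order.lt_succ_iff.1 (hαz.trans_le (self_le_succ_pred _))) hpred hlast

lemma Vnbhd_subset_of_mem (hα : nrm x.1 ≤ α) (hy : y ∈ Vnbhd lam x α) (hαβ : α ≤ β) :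
    Vnbhd lam y β ⊆ Vnbhd lam x α := by
  by_cases hy2 : y.1 0 = 2
  · rw [Vnbhd_of_two hy2]
    exact singleton_subset_iff.2 hy
  have hyx := head_eq_of_mem_Vnbhd hy hy2
  have hx2 : x.1 0 ≠ 2 := hyx ▸ hy2
  intro z hz
  have hagree : ∀ γ, 1 ≤ γ → γ < α → z.1 γ = x.1 γ := fun γ h1 hγ => by
    rw [agree_of_mem_Vnbhd hz γ h1 (hγ.trans_le hαβ), agree_of_mem_Vnbhd hy γ h1 hγ]
  rcases fin3_cases (x.1 0) with hx | hx | hx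
  · obtain ⟨-, hz0⟩ := (mem_Vnbhd_of_zero (hyx.trans hx)).1 hz
    refine (mem_Vnbhd_of_zero hx).2 ⟨hagree, ?_⟩
    rcases hz0 with hz0 | ⟨h2, hβz, hlast⟩
    · exact Or.inl hz0
    · exact Or.inr ⟨h2, hαβ.trans_lt hβz, hlast⟩
  · obtain ⟨-, hyno1, -⟩ := (mem_Vnbhd_of_one hx).1 hy
    obtain ⟨hzy, hzno1, hz0⟩ := (mem_Vnbhd_of_one (hyx.trans hx)).1 hz
    refine (mem_Vnbhd_of_one hx).2 ⟨hagree, fun γ hαγ hγ => ?_, ?_⟩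
    · rcases le_or_gt β γ with hβγ | hγβ
      · exact hzno1 γ hβγ hγ
      · rw [hzy γ ((one_le_of_nrm_le hx2 hα).trans hαγ) hγβ]
        exact hyno1 γ hαγ hγ
    · rcases hz0 with hz0 | ⟨h2, hβz⟩
      · exact Or.inl hz0
      · exact Or.inr ⟨h2, hαβ.trans_lt hβz⟩
  · exact absurd hx hx2

lemma head_eq_of_mem_Vnbhd_inter (hzx : z ∈ Vnbhd lam x α) (hzy : z ∈ Vnbhd lam y β)
    (hx : x.1 0 ≠ 2) (hy : y.1 0 ≠ 2) : x.1 0 = y.1 0 := by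
  rcases fin3_cases (x.1 0) with hx0 | hx0 | hx0 <;>
    rcases fin3_cases (y.1 0) with hy0 | hy0 | hy0 <;>
    simp only [hx0, hy0, ne_eq, not_true_eq_false] at hx hy ⊢
  · exact absurd hzx (disjoint_left.1 (disjoint_Vnbhd_of_one_of_zero hy0 hx0) hzy)
  · exact absurd hzy (disjoint_left.1 (disjoint_Vnbhd_of_one_of_zero hx0 hy0) hzx)

lemma mem_Vnbhd_of_mem_inter (hα : nrm x.1 ≤ α) (hαβ : α ≤ β) (hyβ : nrm y.1 ≤ β)
    (hzx : z ∈ Vnbhd lam x α) (hzy : z ∈ Vnbhd lam y β) : y ∈ Vnbhd lam x α := by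
  by_cases hy2 : y.1 0 = 2
  · rw [Vnbhd_of_two hy2, mem_singleton_iff] at hzy
    rwa [← hzy]
  have hx2 : x.1 0 ≠ 2 := by
    intro hx2
    rw [Vnbhd_of_two hx2, mem_singleton_iff] at hzx
    subst hzx
    exact absurd (lt_nrm_of_mem_Vnbhd hzy hy2 hx2) (hα.trans hαβ).not_gt
  have hxy := head_eq_of_mem_Vnbhd_inter hzx hzy hx2 hy2
  have hagree : ∀ γ, 1 ≤ γ → γ < α → y.1 γ = x.1 γ := fun γ h1 hγ => by
    rw [← agree_of_mem_Vnbhd hzy γ h1 (hγ.trans_le hαβ), agree_of_mem_Vnbhd hzx γ h1 hγ]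
  rcases fin3_cases (x.1 0) with hx | hx | hx
  · exact (mem_Vnbhd_of_zero hx).2 ⟨hagree, Or.inl (hxy ▸ hx)⟩
  · obtain ⟨-, hzno1, -⟩ := (mem_Vnbhd_of_one hx).1 hzx
    refine (mem_Vnbhd_of_one hx).2 ⟨hagree, fun γ hαγ hγ => ?_, Or.inl (hxy ▸ hx)⟩
    rcases le_or_gt β γ with hβγ | hγβ
    · rw [nrm_spec y (hyβ.trans hβγ)]
      decide
    · rw [← agree_of_mem_Vnbhd hzy γ ((one_le_of_nrm_le hx2 hα).trans hαγ) hγβ]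
      exact hzno1 γ hαγ hγ
  · exact absurd hx hx2

lemma Vnbhd_mem_tauSet (hlam : ℵ₀ ≤ lam) (hα : nrm x.1 ≤ α) (hαl : α < lam.ord) :
    Vnbhd lam x α ∈ tauSet lam := fun y hy =>
  ⟨max α (nrm y.1), le_max_right _ _, max_lt hαl (nrm_lt hlam y),
    Vnbhd_subset_of_mem hα hy (le_max_left _ _)⟩

lemma compl_Vnbhd_mem_tauSet (hlam : ℵ₀ ≤ lam) (hα : nrm x.1 ≤ α) (hαl : α < lam.ord) :
    (Vnbhd lam x α)ᶜ ∈ tauSet lam := fun y hy =>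
  ⟨max α (nrm y.1), le_max_right _ _, max_lt hαl (nrm_lt hlam y),
    fun _ hzy hzx => hy (mem_Vnbhd_of_mem_inter hα (le_max_left _ _) (le_max_right _ _) hzx hzy)⟩

end Neighbourhoods

/-- The topological space `(X, τ)` is zero-dimensional: it has a base of
the topology `τ` consisting of clopen sets. -/
theorem zeroDimensional_tau (lam : Cardinal.{u}) (hlam : ℵ₀ ≤ lam) :
    ∃ B : Set (Set ↥(Xset lam)), IsBase (tau lam hlam) B ∧
      ∀ U ∈ B, IsOpen[tau lam hlam] U ∧ IsClosed[tau lam hlam] U := by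
  let _ := tau lam hlam
  have hclopen : ∀ U ∈ Vfamily lam, IsOpen U ∧ IsClosed U := by
    rintro _ ⟨x, α, hα, hαl, rfl⟩
    exact ⟨Vnbhd_mem_tauSet hlam hα hαl, ⟨compl_Vnbhd_mem_tauSet hlam hα hαl⟩⟩
  have hbasis : IsTopologicalBasis (Vfamily lam) :=
    isTopologicalBasis_of_isOpen_of_nhds (fun U hU => (hclopen U hU).1) fun x U hxU hU => by
      obtain ⟨α, hα, hαl, hsub⟩ := hU x hxU
      exact ⟨_, ⟨x, α, hα, hαl, rfl⟩, mem_Vnbhd_self x hα, hsub⟩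
  exact ⟨Vfamily lam, ⟨fun _ => hbasis.isOpen, fun _ => hbasis.open_eq_sUnion⟩, hclopen⟩

end LawsonExample
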